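/- Let (g, [·,·], α) be a multiplicative Hom-Lie algebra with iterated n-bracket [x₁,…,x_n]_n = [[x₁,…,x_{n−1}]_{n−1}, α^{n−2}(x_n)], and let D be an α^k-derivation of g. Then D is an α^k-derivation of (g, [·,…,·]_n, α^{n−1}): D([x₁,…,x_n]_n) = ∑_{i=1}^n [α^k(x₁),…,D(x_i),…,α^k(x_n)]_n. -/
import Mathlib


/-- The iterated n-ary bracket (n = m+2):
[x₁,…,x_n]_n = [[x₁,…,x_{n−1}]_{n−1}, α^{n−2}(x_n)], with [x₁,x₂]₂ = [x₁,x₂]. -/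
noncomputable def iterBracket {K g : Type*} [Field K] [AddCommGroup g] [Module K g]
    (b : g →ₗ[K] g →ₗ[K] g) (α : g → g) : (m : ℕ) → (Fin (m + 2) → g) → g
  | 0, x => b (x 0) (x 1)
  | m + 1, x =>
      b (iterBracket b α m (fun i => x i.castSucc)) (α^[m + 1] (x (Fin.last (m + 2))))

lemma iterBracket_alpha {K g : Type*} [Field K] [AddCommGroup g] [Module K g]
    (b : g →ₗ[K] g →ₗ[K] g) (α : g →ₗ[K] g)
    (hmult : ∀ x y, α (b x y) = b (α x) (α y)) :
    ∀ (m : ℕ) (x : Fin (m + 2) → g),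
      α (iterBracket b (⇑α) m x) = iterBracket b (⇑α) m (fun j => α (x j)) := by
  intro m
  induction m with
  | zero => intro x; simp [iterBracket, hmult]
  | succ m ih =>
    intro x
    simp only [iterBracket, hmult, ih]
    congr 1
    exact (Function.iterate_succ_apply' (⇑α) (m+1) _).symm

lemma iterBracket_alpha_iter {K g : Type*} [Field K] [AddCommGroup g] [Module K g]
    (b : g →ₗ[K] g →ₗ[K] g) (α : g →ₗ[K] g)
    (hmult : ∀ x y, α (b x y) = b (α x) (α y)) (k : ℕ) :
    ∀ (m : ℕ) (x : Fin (m + 2) → g),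
      (⇑α)^[k] (iterBracket b (⇑α) m x) = iterBracket b (⇑α) m (fun j => (⇑α)^[k] (x j)) := by
  induction k with
  | zero => intro m x; simp
  | succ k ih =>
    intro m x
    rw [Function.iterate_succ_apply', ih, iterBracket_alpha b α hmult]
    congr 1
    funext j
    rw [← Function.iterate_succ_apply' (⇑α)]

/-- an α^k-derivation D of a multiplicative Hom-Lie algebra
(g,[·,·],α) is an α^k-derivation of the induced Hom-Lie n-uplet system
(g,[·,…,·]_n,α^{n−1}) (n = m+2). -/
theorem iterBracket_derivation {K g : Type*} [Field K] [CharZero K]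
    [AddCommGroup g] [Module K g]
    (b : g →ₗ[K] g →ₗ[K] g) (α : g →ₗ[K] g)
    (hskew : ∀ x y, b x y = - b y x)
    (hJac : ∀ x y z : g, b (α x) (b y z) + b (α y) (b z x) + b (α z) (b x y) = 0)
    (hmult : ∀ x y, α (b x y) = b (α x) (α y))
    (k : ℕ) (D : g →ₗ[K] g)
    (hDα : ∀ x, D (α x) = α (D x))
    (hD : ∀ x y, D (b x y) = b (D x) ((⇑α)^[k] y) + b ((⇑α)^[k] x) (D y))
    (m : ℕ) :
    ∀ x : Fin (m + 2) → g,
      D (iterBracket b (⇑α) m x) =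
        ∑ i : Fin (m + 2),
          iterBracket b (⇑α) m
            (Function.update (fun j => (⇑α)^[k] (x j)) i (D (x i))) := by
  have hDαit : ∀ (n : ℕ) (y : g), D ((⇑α)^[n] y) = (⇑α)^[n] (D y) := by
    intro n
    induction n with
    | zero => intro y; simp
    | succ n ih => intro y; rw [Function.iterate_succ_apply', hDα, ih,
        Function.iterate_succ_apply']
  have hcomm : ∀ (n : ℕ) (y : g), (⇑α)^[k] ((⇑α)^[n] y) = (⇑α)^[n] ((⇑α)^[k] y) := by
    intro n y
    rw [← Function.iterate_add_apply, ← Function.iterate_add_apply, Nat.add_comm]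
  induction m with
  | zero =>
    intro x
    simp [iterBracket, Fin.sum_univ_two, hD, Function.update_apply, show (1:Fin 2) ≠ 0 by decide]
  | succ m ih =>
    intro x
    rw [show iterBracket b (⇑α) (m+1) x
        = b (iterBracket b (⇑α) m (fun i => x i.castSucc))
            ((⇑α)^[m + 1] (x (Fin.last (m + 2)))) from rfl,
      hD, Fin.sum_univ_castSucc]
    congr 1
    · -- castSucc part
      rw [ih (fun i => x i.castSucc), map_sum, LinearMap.sum_apply]
      apply Finset.sum_congr rfl
      intro j _
      have hrestr : (fun i : Fin (m+2) =>
          Function.update (fun j' : Fin (m+3) => (⇑α)^[k] (x j')) j.castSucc (D (x j.castSucc))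
            i.castSucc)
          = Function.update (fun j' : Fin (m+2) => (⇑α)^[k] (x j'.castSucc)) j (D (x j.castSucc)) := by
        funext i
        simp [Function.update_apply, Fin.castSucc_inj]
      have hlast : Function.update (fun j' : Fin (m+3) => (⇑α)^[k] (x j')) j.castSucc
          (D (x j.castSucc)) (Fin.last (m+2)) = (⇑α)^[k] (x (Fin.last (m+2))) := by
        rw [Function.update_of_ne (Fin.castSucc_lt_last j).ne']
      show b _ _ = iterBracket b (⇑α) (m+1) _
      rw [show ∀ y : Fin (m+3) → g, iterBracket b (⇑α) (m+1) y
          = b (iterBracket b (⇑α) m (fun i => y i.castSucc))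
              ((⇑α)^[m + 1] (y (Fin.last (m + 2)))) from fun _ => rfl,
        hrestr, hlast, hcomm]
    · -- last term
      have hrestr : (fun i : Fin (m+2) =>
          Function.update (fun j' : Fin (m+3) => (⇑α)^[k] (x j')) (Fin.last (m+2))
            (D (x (Fin.last (m+2)))) i.castSucc)
          = fun i : Fin (m+2) => (⇑α)^[k] (x i.castSucc) := by
        funext i
        rw [Function.update_of_ne (Fin.castSucc_lt_last i).ne]
      show b _ _ = iterBracket b (⇑α) (m+1) _
      rw [show ∀ y : Fin (m+3) → g, iterBracket b (⇑α) (m+1) y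
          = b (iterBracket b (⇑α) m (fun i => y i.castSucc))
              ((⇑α)^[m + 1] (y (Fin.last (m + 2)))) from fun _ => rfl,
        hrestr, Function.update_self, hDαit,
        iterBracket_alpha_iter b α hmult]
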